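/- In the lower-bound construction for the (α,k)-price of anarchy (complete bipartite-plus-clique graph: V_1 of size k with internal edges of weight 1 and all edges to V_2 of size n−k with weight α; S_v = {a,c} for v∈V_1, S_v = {b,c} for v∈V_2), the profile s where V_1 plays a and V_2 plays b is an (α,k)-equilibrium: for every coalition K with |K| ≤ k and every deviation, some member i∈K fails to improve by more than factor α. Specifically, any improving coalition must deviate to c and contain a member v∈V_1 whose new payoff is at most |N_v ∩ K| ≤ α(k−1) = α·p_v(s). -/
import Mathlib


open Finset

section

variable (n k : ℕ) (α : ℝ)

/-- Nodes `0,…,k-1` form `V₁`, nodes `k,…,n-1` form `V₂`. -/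
def lbInV1 (k : ℕ) (v : Fin n) : Prop := v.val < k

instance : DecidablePred (lbInV1 n k) := fun v => decidable_of_iff (v.val < k) Iff.rfl

/-- Edge weights: weight `1` inside `V₁`, weight `α` between `V₁` and `V₂`, no edges
inside `V₂`. -/
def lbW (u v : Fin n) : ℝ :=
  if u = v then 0
  else if lbInV1 n k u ∧ lbInV1 n k v then 1
  else if lbInV1 n k u ∨ lbInV1 n k v then α
  else 0

/-- Colors: `0 = a`, `1 = b`, `2 = c`. Color sets: `{a,c}` on `V₁` and `{b,c}` on `V₂`. -/
def lbAllowed (v : Fin n) : Finset (Fin 3) := if lbInV1 n k v then {0, 2} else {1, 2}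

/-- Payoff of node `v` under coloring `s`: total weight of incident unicolor edges. -/
def lbP (s : Fin n → Fin 3) (v : Fin n) : ℝ :=
  ∑ u ∈ univ.filter (fun u => s u = s v), lbW n k α v u

/-- Social welfare. -/
def lbSW (s : Fin n → Fin 3) : ℝ := ∑ v, lbP n k α s v

/-- The equilibrium profile: `V₁` plays `a`, `V₂` plays `b`. -/
def lbEqProf (v : Fin n) : Fin 3 := if lbInV1 n k v then 0 else 1

end

section
variable (n k : ℕ) (α : ℝ)

lemma lbW_nonneg (hα : 1 ≤ α) (u v : Fin n) : 0 ≤ lbW n k α u v := by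
  unfold lbW; split_ifs <;> linarith

lemma lbW_le_alpha (hα : 1 ≤ α) (u v : Fin n) : lbW n k α u v ≤ α := by
  unfold lbW; split_ifs <;> linarith

lemma lbW_self (v : Fin n) : lbW n k α v v = 0 := by
  unfold lbW; simp

lemma lbW_zero_of_notV1 (u v : Fin n) (hu : ¬ lbInV1 n k u) (hv : ¬ lbInV1 n k v) :
    lbW n k α u v = 0 := by
  unfold lbW
  split_ifs with h1 h2 h3
  · rfl
  · exact absurd h2.1 hu
  · rcases h3 with h | h
    · exact absurd h hu
    · exact absurd h hv
  · rfl

lemma lbV1_card (hkn : k ≤ n) :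
    (Finset.univ.filter (fun u : Fin n => lbInV1 n k u)).card = k := by
  have h : Finset.univ.filter (fun u : Fin n => lbInV1 n k u)
      = (Finset.univ : Finset (Fin k)).image (Fin.castLE hkn) := by
    ext u
    simp only [Finset.mem_filter, Finset.mem_univ, true_and, Finset.mem_image]
    constructor
    · intro h; exact ⟨⟨u.val, h⟩, Fin.ext rfl⟩
    · rintro ⟨i, rfl⟩; exact i.isLt
  rw [h, Finset.card_image_of_injective _ (Fin.castLE_injective hkn), Finset.card_univ,
    Fintype.card_fin]

lemma lbP_eq_V1 (hkn : k ≤ n) (v : Fin n) (hv : lbInV1 n k v) :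
    lbP n k α (lbEqProf n k) v = (k : ℝ) - 1 := by
  have hfe : Finset.univ.filter (fun u => lbEqProf n k u = lbEqProf n k v)
      = Finset.univ.filter (fun u : Fin n => lbInV1 n k u) := by
    ext u
    simp only [Finset.mem_filter, Finset.mem_univ, true_and, lbEqProf, hv, if_true]
    split_ifs with h
    · simp [h]
    · simp [h]
  unfold lbP
  rw [hfe]
  have hterm : ∀ u ∈ Finset.univ.filter (fun u : Fin n => lbInV1 n k u),
      lbW n k α v u = 1 - (if v = u then (1:ℝ) else 0) := by
    intro u hu
    simp only [Finset.mem_filter] at hu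
    unfold lbW
    by_cases h : v = u
    · simp [h]
    · simp [h, hv, hu.2]
  rw [Finset.sum_congr rfl hterm, Finset.sum_sub_distrib, Finset.sum_const,
    Finset.sum_ite_eq, lbV1_card n k hkn]
  simp [hv]

lemma lbP_eqProf_V2 (v : Fin n) (hv : ¬ lbInV1 n k v) :
    lbP n k α (lbEqProf n k) v = 0 := by
  unfold lbP
  apply Finset.sum_eq_zero
  intro u hu
  simp only [Finset.mem_filter, Finset.mem_univ, true_and, lbEqProf, hv, if_neg hv] at hu
  by_cases h : lbInV1 n k u
  · rw [if_pos h] at hu; exact absurd hu (by decide)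
  · exact lbW_zero_of_notV1 n k α v u hv h

end

/-- In the lower-bound construction for the `(α,k)`-price of anarchy
(`V₁` of size `k` with internal edges of weight `1` and all edges to `V₂` of weight `α`;
color sets `{a,c}` on `V₁` and `{b,c}` on `V₂`), the profile where `V₁` plays `a` and `V₂`
plays `b` is an `(α,k)`-equilibrium: for every coalition of size at most `k` and every
deviation, some member fails to improve by more than a factor `α`. -/
theorem lb_profile_is_alpha_k_equilibrium (n k : ℕ) (hn : 2 ≤ n) (hk2 : 2 ≤ k) (hkn : k ≤ n)
    (α : ℝ) (hα : 1 ≤ α) :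
    ∀ (K : Finset (Fin n)) (s' : Fin n → Fin 3), K.Nonempty → K.card ≤ k →
      (∀ v ∈ K, s' v ∈ lbAllowed n k v) →
      (∀ v ∉ K, s' v = lbEqProf n k v) →
      ∃ v ∈ K, lbP n k α s' v ≤ α * lbP n k α (lbEqProf n k) v := by
  intro K s' hKne hKcard hallow hfix
  have hk1 : (1:ℝ) ≤ (k:ℝ) := by exact_mod_cast Nat.one_le_of_lt hk2
  by_cases hV1 : ∃ v ∈ K, lbInV1 n k v
  · obtain ⟨v, hvK, hv1⟩ := hV1
    refine ⟨v, hvK, ?_⟩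
    rw [lbP_eq_V1 n k α hkn v hv1]
    have hsv : s' v = 0 ∨ s' v = 2 := by
      have h := hallow v hvK
      simp only [lbAllowed, hv1, if_true, Finset.mem_insert, Finset.mem_singleton] at h
      exact h
    rcases hsv with h0 | h2
    · -- s' v = 0 : new payoff ≤ k - 1
      have hsub : Finset.univ.filter (fun u => s' u = s' v)
          ⊆ Finset.univ.filter (fun u : Fin n => lbInV1 n k u) := by
        intro u hu
        simp only [Finset.mem_filter, Finset.mem_univ, true_and, h0] at hu ⊢
        by_contra hu1
        by_cases huK : u ∈ K
        · have h := hallow u huK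
          simp only [lbAllowed, hu1, if_false, Finset.mem_insert, Finset.mem_singleton] at h
          rcases h with h | h <;> rw [h] at hu <;> exact absurd hu (by decide)
        · have h := hfix u huK
          rw [hu] at h
          simp [lbEqProf, hu1] at h
      have hle : lbP n k α s' v ≤ (k:ℝ) - 1 := by
        unfold lbP
        calc ∑ u ∈ Finset.univ.filter (fun u => s' u = s' v), lbW n k α v u
            ≤ ∑ u ∈ Finset.univ.filter (fun u : Fin n => lbInV1 n k u), lbW n k α v u := by
              apply Finset.sum_le_sum_of_subset_of_nonneg hsub
              intro u _ _; exact lbW_nonneg n k α hα v u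
          _ = (k:ℝ) - 1 := by
              have := lbP_eq_V1 n k α hkn v hv1
              unfold lbP at this
              rw [← this]
              congr 1
              ext u
              simp only [Finset.mem_filter, Finset.mem_univ, true_and, lbEqProf, hv1, if_true]
              split_ifs with h <;> simp [h]
      nlinarith
    · -- s' v = 2 : unicolor class ⊆ K
      have hsub : Finset.univ.filter (fun u => s' u = s' v) ⊆ K := by
        intro u hu
        simp only [Finset.mem_filter, Finset.mem_univ, true_and, h2] at hu
        by_contra huK
        have h := hfix u huK
        rw [hu] at h
        unfold lbEqProf at h
        split_ifs at h <;> exact absurd h (by decide)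
      set F := Finset.univ.filter (fun u => s' u = s' v) with hF
      have hvF : v ∈ F := by simp [hF]
      have hle : lbP n k α s' v ≤ ((F.erase v).card : ℝ) * α := by
        unfold lbP
        rw [← hF, ← Finset.sum_erase F (lbW_self n k α v)]
        calc ∑ u ∈ F.erase v, lbW n k α v u
            ≤ ∑ _u ∈ F.erase v, α :=
              Finset.sum_le_sum (fun u _ => lbW_le_alpha n k α hα v u)
          _ = ((F.erase v).card : ℝ) * α := by rw [Finset.sum_const, nsmul_eq_mul]
      have hcard : ((F.erase v).card : ℝ) ≤ (k:ℝ) - 1 := by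
        have h1 : (F.erase v).card ≤ (K.erase v).card :=
          Finset.card_le_card (Finset.erase_subset_erase v hsub)
        have h2 : (K.erase v).card = K.card - 1 := Finset.card_erase_of_mem hvK
        have h3 : 1 ≤ K.card := Finset.card_pos.mpr ⟨v, hvK⟩
        have : (F.erase v).card ≤ k - 1 := by omega
        have hcast : ((F.erase v).card : ℝ) ≤ ((k - 1 : ℕ) : ℝ) := by exact_mod_cast this
        rwa [Nat.cast_sub (by omega), Nat.cast_one] at hcast
      have hα0 : (0:ℝ) ≤ α := by linarith
      calc lbP n k α s' v ≤ ((F.erase v).card : ℝ) * α := hle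
        _ ≤ ((k:ℝ) - 1) * α := by nlinarith
        _ = α * ((k:ℝ) - 1) := by ring
  · push_neg at hV1
    obtain ⟨v, hvK⟩ := hKne
    refine ⟨v, hvK, ?_⟩
    have hv2 : ¬ lbInV1 n k v := hV1 v hvK
    rw [lbP_eqProf_V2 n k α v hv2]
    have hnew : lbP n k α s' v = 0 := by
      unfold lbP
      apply Finset.sum_eq_zero
      intro u hu
      simp only [Finset.mem_filter, Finset.mem_univ, true_and] at hu
      by_cases hu1 : lbInV1 n k u
      · exfalso
        have hsv : s' v = 1 ∨ s' v = 2 := by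
          have h := hallow v hvK
          simp only [lbAllowed, if_neg hv2, Finset.mem_insert, Finset.mem_singleton] at h
          exact h
        by_cases huK : u ∈ K
        · exact hV1 u huK hu1
        · have h := hfix u huK
          rw [hu] at h
          simp only [lbEqProf, hu1, if_true] at h
          rcases hsv with h' | h' <;> rw [h'] at h <;> exact absurd h (by decide)
      · exact lbW_zero_of_notV1 n k α v u hv2 hu1
    rw [hnew]
    simp
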